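/- Let f ∈ Cu(G) and let A be a van Hove sequence. If f is amenable with respect to A, then f is amenable with respect to every van Hove sequence B, and the mean is independent of the sequence: M_A(f) = M_B(f). -/

import Mathlib

/-!
Fix `ε` and a set `S = A_N` all of whose translates carry averages of `f` within `ε/2` of `c`.
For a van Hove set `T` and a point `x`, integrate `f (x + t + u)` over `t ∈ T`, `u ∈ S` in both
orders. Averaging over `u` first gives `|S| |T| c` up to `|S| |T| ε/2`. Averaging over `t` first,
shifting `T` by `u ∈ S` changes `∫_{x+T} f` by at most `‖f‖_∞ |∂^K T|` with `K = S ∪ -S`, and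
`|∂^K T| = o(|T|)`. Comparing the two gives `|T|⁻¹ ∫_{x+T} f = c` up to `ε/2 + o(1)`,
uniformly in `x`.
-/

open MeasureTheory Filter Topology Pointwise ComplexConjugate
open scoped BigOperators

noncomputable section

variable {G : Type*} [AddCommGroup G] [UniformSpace G] [IsUniformAddGroup G]
  [LocallyCompactSpace G] [SecondCountableTopology G]
  [MeasurableSpace G] [BorelSpace G]

/-- The van Hove `K`-boundary of a set `B`:
`∂^K B = (closure (B+K) \ B) ∪ (((G \ B) - K) ∩ closure B)`. -/
def vhBoundary (K B : Set G) : Set G :=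
  (closure (B + K) \ B) ∪ ((Bᶜ - K) ∩ closure B)

/-- `A` is a van Hove sequence for the Haar measure `μ`: a sequence of compact sets of
positive measure such that for every compact `K` the relative measure of the van Hove
boundary tends to `0`. -/
def IsVanHove (μ : Measure G) (A : ℕ → Set G) : Prop :=
  (∀ n, IsCompact (A n)) ∧ (∀ n, 0 < μ (A n)) ∧
    ∀ K : Set G, IsCompact K →
      Tendsto (fun n => μ (vhBoundary K (A n)) / μ (A n)) atTop (nhds 0)

/-- `f ∈ Cu(G)`: bounded and uniformly continuous. -/
def IsCu (f : G → ℂ) : Prop :=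
  UniformContinuous f ∧ ∃ C : ℝ, ∀ x, ‖f x‖ ≤ C

/-- `χ` is a (continuous, unimodular) character of `G`, viewed as a `ℂ`-valued function. -/
def IsChar (χ : G → ℂ) : Prop :=
  Continuous χ ∧ (∀ x, ‖χ x‖ = 1) ∧ ∀ x y, χ (x + y) = χ x * χ y

/-- `f̃(x) = conj (f (-x))`. -/
def tilde (f : G → ℂ) : G → ℂ := fun x => conj (f (-x))

/-- `(T_t f)(x) = f (x - t)`. -/
def shiftBy (t : G) (f : G → ℂ) : G → ℂ := fun x => f (x - t)

/-- Sup norm `‖f‖_∞`. -/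
def supN (f : G → ℂ) : ℝ := ⨆ x, ‖f x‖

/-- The Fourier–Bohr coefficient `c_χ^A(f)` exists and equals `c`. -/
def FBTendsto (μ : Measure G) (A : ℕ → Set G) (χ f : G → ℂ) (c : ℂ) : Prop :=
  Tendsto (fun n => (μ (A n)).toReal⁻¹ • ∫ t in A n, conj (χ t) * f t ∂μ)
    atTop (nhds c)

/-- The Fourier–Bohr coefficient of `f` at `χ` exists uniformly (w.r.t. `A`) with value `c`:
`lim_n |A_n|⁻¹ ∫_{x+A_n} conj (χ t) f t dθ(t) = c` uniformly in `x ∈ G`. -/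
def FBUniform (μ : Measure G) (A : ℕ → Set G) (χ f : G → ℂ) (c : ℂ) : Prop :=
  TendstoUniformly
    (fun n (x : G) => (μ (A n)).toReal⁻¹ • ∫ t in x +ᵥ A n, conj (χ t) * f t ∂μ)
    (fun _ => c) atTop

/-- The Eberlein convolution `f ⊛_A g` exists and equals `F`:
for every `t`, `lim_n |A_n|⁻¹ ∫_{A_n} f s · g (t - s) dθ(s) = F t`. -/
def EberleinTendsto (μ : Measure G) (A : ℕ → Set G) (f g F : G → ℂ) : Prop :=
  ∀ t : G, Tendsto (fun n => (μ (A n)).toReal⁻¹ • ∫ s in A n, f s * g (t - s) ∂μ)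
    atTop (nhds (F t))

/-- The Besicovitch seminorm `‖f‖_{b,p,A}`. -/
def bNorm (μ : Measure G) (A : ℕ → Set G) (p : ℝ) (f : G → ℂ) : ℝ :=
  Filter.limsup
    (fun n => ((μ (A n)).toReal⁻¹ * ∫ t in A n, ‖f t‖ ^ p ∂μ) ^ (1 / p)) atTop

/-- `P` is a trigonometric polynomial: a finite linear combination of characters. -/
def IsTrigPoly (P : G → ℂ) : Prop :=
  ∃ (k : ℕ) (c : Fin k → ℂ) (χ : Fin k → G → ℂ),
    (∀ j, IsChar (χ j)) ∧ P = fun x => ∑ j, c j * χ j x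

/-- `f ∈ Bap^p_A(G)`: `f` can be approximated by trigonometric polynomials in `‖·‖_{b,p,A}`. -/
def BapP (μ : Measure G) (A : ℕ → Set G) (p : ℝ) (f : G → ℂ) : Prop :=
  ∀ ε : ℝ, 0 < ε → ∃ P : G → ℂ, IsTrigPoly P ∧ bNorm μ A p (fun x => f x - P x) < ε

/-- `f` is amenable w.r.t. `A` with mean `c`:
`lim_n |A_n|⁻¹ ∫_{x+A_n} f dθ = c` uniformly in `x ∈ G`. -/
def Amenable (μ : Measure G) (A : ℕ → Set G) (f : G → ℂ) (c : ℂ) : Prop :=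
  TendstoUniformly
    (fun n (x : G) => (μ (A n)).toReal⁻¹ • ∫ t in x +ᵥ A n, f t ∂μ)
    (fun _ => c) atTop

open scoped symmDiff

/- In an R₁ space the closure of a compact set only adds points inseparable from it, which no
Borel set can tell apart. -/
theorem IsCompact.restrict_closure {X : Type*} [TopologicalSpace X] [R1Space X]
    [MeasurableSpace X] [BorelSpace X] (μ : Measure X) {s : Set X} (hs : IsCompact s)
    (hμs : μ s ≠ ⊤) : μ.restrict (closure s) = μ.restrict s := by
  refine le_antisymm ?_ (Measure.restrict_mono subset_closure le_rfl)
  calc μ.restrict (closure s) ≤ μ.restrict (toMeasurable μ s) :=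
        Measure.restrict_mono
          (hs.closure_subset_measurableSet (measurableSet_toMeasurable μ s)
            (subset_toMeasurable μ s)) le_rfl
    _ = μ.restrict s := Measure.restrict_toMeasurable hμs

theorem setIntegral_vadd_eq {H E : Type*} [AddGroup H] [MeasurableSpace H] [MeasurableAdd H]
    [NormedAddCommGroup E] [NormedSpace ℝ E] (μ : Measure H) [μ.IsAddLeftInvariant]
    (f : H → E) (s : Set H) (x : H) :
    ∫ t in x +ᵥ s, f t ∂μ = ∫ t in s, f (x + t) ∂μ :=
  (measurePreserving_add_left μ x).setIntegral_image_emb (measurableEmbedding_addLeft x) f s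

theorem norm_setIntegral_sub_setIntegral_le {Ω E : Type*} [MeasurableSpace Ω]
    [NormedAddCommGroup E] [NormedSpace ℝ E] {μ : Measure Ω} {S T : Set Ω}
    (hS : MeasurableSet S) (hT : MeasurableSet T) (hSμ : μ S ≠ ⊤) (hTμ : μ T ≠ ⊤)
    {g : Ω → E} (hg : AEStronglyMeasurable g μ) {C : ℝ} (hC : ∀ x, ‖g x‖ ≤ C) :
    ‖∫ x in S, g x ∂μ - ∫ x in T, g x ∂μ‖ ≤ C * μ.real (S ∆ T) := by
  have hint : ∀ {U : Set Ω}, μ U ≠ ⊤ → IntegrableOn g U μ := fun hU =>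
    .of_bound hU.lt_top hg.restrict C (ae_of_all _ hC)
  rw [← integral_inter_add_sdiff₀ hT.nullMeasurableSet (hint hSμ),
    ← integral_inter_add_sdiff₀ hS.nullMeasurableSet (hint hTμ), Set.inter_comm T S,
    add_sub_add_left_eq_sub, measureReal_symmDiff_eq hS hT hSμ hTμ, mul_add]
  have hbound : ∀ {U : Set Ω}, U ⊆ S ∪ T → ‖∫ x in U, g x ∂μ‖ ≤ C * μ.real U := fun hU =>
    norm_setIntegral_le_of_norm_le_const
      ((measure_mono hU).trans_lt (measure_union_lt_top hSμ.lt_top hTμ.lt_top))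
      fun x _ => hC x
  exact (norm_sub_le _ _).trans
    (add_le_add (hbound (Set.sdiff_subset.trans Set.subset_union_left))
      (hbound (Set.sdiff_subset.trans Set.subset_union_right)))

theorem norm_inv_smul_sub_le_iff {E : Type*} [NormedAddCommGroup E] [NormedSpace ℝ E]
    {r : ℝ} (hr : 0 < r) {v c : E} {η : ℝ} :
    ‖r⁻¹ • v - c‖ ≤ η ↔ ‖v - r • c‖ ≤ r * η := by
  rw [show r⁻¹ • v - c = r⁻¹ • (v - r • c) by rw [smul_sub, inv_smul_smul₀ hr.ne'],
    norm_smul, Real.norm_of_nonneg (inv_nonneg.2 hr.le), inv_mul_le_iff₀ hr]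

theorem norm_smul_sub_smul_le_of_integral_integral {α β E : Type*} [MeasurableSpace α]
    [MeasurableSpace β] [NormedAddCommGroup E] [NormedSpace ℝ E] [CompleteSpace E]
    {μ : Measure α} {ν : Measure β} [IsFiniteMeasure μ] [IsFiniteMeasure ν] {F : α → β → E}
    (hF : Integrable (Function.uncurry F) (μ.prod ν)) {c I : E} {ε₁ ε₂ : ℝ}
    (h₁ : ∀ᵐ x ∂μ, ‖∫ y, F x y ∂ν - ν.real Set.univ • c‖ ≤ ε₁)
    (h₂ : ∀ᵐ y ∂ν, ‖∫ x, F x y ∂μ - I‖ ≤ ε₂) :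
    ‖ν.real Set.univ • I - (μ.real Set.univ * ν.real Set.univ) • c‖ ≤
      ε₁ * μ.real Set.univ + ε₂ * ν.real Set.univ := by
  have hc : ‖∫ x, ∫ y, F x y ∂ν ∂μ - (μ.real Set.univ * ν.real Set.univ) • c‖ ≤
      ε₁ * μ.real Set.univ := by
    have hint : Integrable (fun x => ∫ y, F x y ∂ν) μ := hF.integral_prod_left
    rw [mul_smul, ← integral_const, ← integral_sub hint (integrable_const _)]
    exact norm_integral_le_of_norm_le_const h₁
  have hI : ‖∫ y, ∫ x, F x y ∂μ ∂ν - ν.real Set.univ • I‖ ≤ ε₂ * ν.real Set.univ := by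
    have hint : Integrable (fun y => ∫ x, F x y ∂μ) ν := hF.integral_prod_right
    rw [← integral_const, ← integral_sub hint (integrable_const _)]
    exact norm_integral_le_of_norm_le_const h₂
  rw [integral_integral_swap hF] at hc
  calc _ ≤ ‖ν.real Set.univ • I - ∫ y, ∫ x, F x y ∂μ ∂ν‖ +
        ‖∫ y, ∫ x, F x y ∂μ ∂ν - (μ.real Set.univ * ν.real Set.univ) • c‖ :=
        norm_sub_le_norm_sub_add_norm_sub _ _ _
    _ ≤ _ := by rw [norm_sub_rev]; linarith

section VanHove

variable {H : Type*} [AddCommGroup H] [UniformSpace H] [IsUniformAddGroup H]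

theorem vadd_closure_symmDiff_subset_vhBoundary {K B : Set H} {u : H} (hu : u ∈ K)
    (hnu : -u ∈ K) : (u +ᵥ closure B) ∆ closure B ⊆ vhBoundary K B := by
  rintro t (⟨⟨s, hs, rfl⟩, ht⟩ | ⟨ht, htu⟩)
  · refine Or.inl ⟨?_, fun htB => ht (subset_closure htB)⟩
    show u + s ∈ closure (B + K)
    rw [add_comm u s]
    exact map_mem_closure (f := (· + u)) (continuous_add_const u) hs
      fun y hy => Set.add_mem_add hy hu
  · refine Or.inr ⟨⟨t - u, fun hB => htu ⟨t - u, subset_closure hB, add_sub_cancel u t⟩,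
      -u, hnu, by simp⟩, ht⟩

theorem measure_vhBoundary_lt_top [MeasurableSpace H] (μ : Measure H)
    [IsFiniteMeasureOnCompacts μ] {K B : Set H} (hK : IsCompact K) (hB : IsCompact B) :
    μ (vhBoundary K B) < ⊤ := by
  refine (measure_mono ?_).trans_lt
    (measure_union_lt_top (hB.add hK).closure.measure_lt_top hB.closure.measure_lt_top)
  exact Set.union_subset_union Set.sdiff_subset Set.inter_subset_right

theorem norm_average_vadd_sub_le [SecondCountableTopology H] [MeasurableSpace H] [BorelSpace H]
    {E : Type*} [NormedAddCommGroup E] [NormedSpace ℝ E] [CompleteSpace E]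
    (μ : Measure H) [μ.IsAddLeftInvariant] [IsFiniteMeasureOnCompacts μ]
    {f : H → E} (hf : Continuous f) {C : ℝ} (hC : ∀ x, ‖f x‖ ≤ C)
    {S T : Set H} (hS : IsCompact S) (hS₀ : 0 < μ S) (hT : IsCompact T) (hT₀ : 0 < μ T)
    {c : E} {η : ℝ} (hSc : ∀ z : H, ‖(μ.real S)⁻¹ • ∫ t in z +ᵥ S, f t ∂μ - c‖ ≤ η) (x : H) :
    ‖(μ.real T)⁻¹ • ∫ t in x +ᵥ T, f t ∂μ - c‖ ≤
      η + C * μ.real (vhBoundary (closure S ∪ -closure S) T) / μ.real T := by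
  set K := closure S ∪ -closure S
  set β := μ.real (vhBoundary K T)
  have hC₀ : 0 ≤ C := (norm_nonneg _).trans (hC 0)
  have ha : 0 < μ.real S := ENNReal.toReal_pos hS₀.ne' hS.measure_lt_top.ne
  have hb : 0 < μ.real T := ENNReal.toReal_pos hT₀.ne' hT.measure_lt_top.ne
  -- Without T₂, compact sets need not be Borel: integrals over them are moved to closures.
  have hvadd : ∀ {s : Set H}, IsCompact s → ∀ (z : H) (g : H → E),
      ∫ t in z +ᵥ s, g t ∂μ = ∫ t in closure s, g (z + t) ∂μ := fun hs z g => by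
    rw [setIntegral_vadd_eq, hs.restrict_closure μ hs.measure_lt_top.ne]
  have : IsFiniteMeasure (μ.restrict (closure S)) :=
    isFiniteMeasure_restrict.2 hS.closure.measure_lt_top.ne
  have : IsFiniteMeasure (μ.restrict (closure T)) :=
    isFiniteMeasure_restrict.2 hT.closure.measure_lt_top.ne
  have hreal_closure : ∀ {s : Set H}, IsCompact s → μ.real (closure s) = μ.real s :=
    fun hs => by rw [measureReal_def, hs.measure_closure, measureReal_def]
  set I := ∫ t in closure T, f (x + t) ∂μ
  have hinner : ∀ᵐ t ∂μ.restrict (closure T), ‖∫ u in closure S, f (x + t + u) ∂μ -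
      (μ.restrict (closure S)).real Set.univ • c‖ ≤ μ.real S * η := by
    refine ae_of_all _ fun t => ?_
    rw [measureReal_restrict_apply_univ, hreal_closure hS, ← hvadd hS,
      ← norm_inv_smul_sub_le_iff ha]
    exact hSc (x + t)
  have hshift : ∀ᵐ u ∂μ.restrict (closure S),
      ‖∫ t in closure T, f (x + t + u) ∂μ - I‖ ≤ C * β := by
    filter_upwards [ae_restrict_mem isClosed_closure.measurableSet] with u hu
    have hK : u ∈ K ∧ -u ∈ K := ⟨Or.inl hu, Or.inr (Set.neg_mem_neg.2 hu)⟩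
    have hI : ∫ t in closure T, f (x + t + u) ∂μ = ∫ t in u +ᵥ closure T, f (x + t) ∂μ := by
      simp only [setIntegral_vadd_eq, add_left_comm u, add_comm _ u]
    rw [hI]
    refine (norm_setIntegral_sub_setIntegral_le (isClosed_closure.measurableSet.const_vadd u)
      isClosed_closure.measurableSet (hT.closure.vadd u).measure_lt_top.ne
      hT.closure.measure_lt_top.ne (hf.comp (continuous_const_add x)).aestronglyMeasurable
      fun t => hC _).trans ?_
    exact mul_le_mul_of_nonneg_left (measureReal_mono
      (vadd_closure_symmDiff_subset_vhBoundary hK.1 hK.2)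
      (measure_vhBoundary_lt_top μ (hS.closure.union hS.closure.neg) hT).ne) hC₀
  have hF : Integrable (Function.uncurry fun t u => f (x + t + u))
      ((μ.restrict (closure T)).prod (μ.restrict (closure S))) :=
    .of_bound (by fun_prop : Continuous fun p : H × H => f (x + p.1 + p.2)).aestronglyMeasurable
      C (ae_of_all _ fun p => hC _)
  have key := norm_smul_sub_smul_le_of_integral_integral hF hinner hshift
  rw [measureReal_restrict_apply_univ, measureReal_restrict_apply_univ, hreal_closure hS,
    hreal_closure hT, mul_comm, mul_smul, ← smul_sub, norm_smul,
    Real.norm_of_nonneg ha.le] at key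
  rw [hvadd hT, norm_inv_smul_sub_le_iff hb]
  calc ‖I - μ.real T • c‖ ≤ η * μ.real T + C * β :=
        le_of_mul_le_mul_left (by linarith) ha
    _ = μ.real T * (η + C * β / μ.real T) := by field_simp

end VanHove

/-- an amenable function is amenable w.r.t. every van Hove sequence, with
the same mean. -/
theorem stmt18 (μ : Measure G) [μ.IsAddHaarMeasure] (A : ℕ → Set G)
    (hA : IsVanHove μ A) (f : G → ℂ) (hf : IsCu f) (c : ℂ)
    (h : Amenable μ A f c) :
    ∀ B : ℕ → Set G, IsVanHove μ B → Amenable μ B f c := by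
  obtain ⟨hAc, hA₀, -⟩ := hA
  obtain ⟨hfu, C, hC⟩ := hf
  rintro B ⟨hBc, hB₀, hBvh⟩
  rw [Amenable, Metric.tendstoUniformly_iff] at h ⊢
  intro ε hε
  obtain ⟨N, hN⟩ := (h (ε / 2) (half_pos hε)).exists
  set K := closure (A N) ∪ -closure (A N)
  have hK : IsCompact K := (hAc N).closure.union (hAc N).closure.neg
  have hratio : Tendsto (fun m => C * (μ.real (vhBoundary K (B m)) / μ.real (B m)))
      atTop (𝓝 0) := by
    have := ((ENNReal.tendsto_toReal ENNReal.zero_ne_top).comp (hBvh K hK)).const_mul C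
    simpa [Function.comp_def, ENNReal.toReal_div, measureReal_def] using this
  filter_upwards [hratio.eventually (gt_mem_nhds (half_pos hε))] with m hm x
  have hAN : ∀ z, ‖(μ.real (A N))⁻¹ • ∫ t in z +ᵥ A N, f t ∂μ - c‖ ≤ ε / 2 := fun z => by
    rw [← dist_eq_norm, dist_comm]
    exact (hN z).le
  have hBm := norm_average_vadd_sub_le μ hfu.continuous hC (hAc N) (hA₀ N) (hBc m) (hB₀ m) hAN x
  rw [mul_div_assoc] at hBm
  rw [dist_comm, dist_eq_norm]
  exact hBm.trans_lt (by linarith)
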